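/- arXiv:2604.02138 — 7 statements merged into one kernel-verified Lean document; each statement's English description precedes it below -/
import Mathlib

section
/- For any simplicial complex K ≠ Δ_[m] on [m] with m ≥ 2, μ_i(K) = α_i(K^∨) for all 0 ≤ i ≤ m-1, where μ_k(K) = (-1)^{m-k-1} Σ_{j=0}^{k} C(m-j, k-j) α_j(K) and K^∨ is the Alexander dual. -/
/-!
Since `K` omits the full simplex, `α(K)(t) = ∑_{σ ∈ K} (t - 1)^{|σ|}`, and complementation
identifies the non-faces of `K^∨` with `K`, so `α(K^∨)(t) = t^m - ∑_{σ ∈ K} (t - 1)^{m - |σ|}`.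
On the other side, `∑_j C(m-j, k-j) α_j` is the `t^k`-coefficient of
`∑_j α_j t^j (1 + t)^{m-j}`, and for `α = (t - 1)^c` this sum is
`(t - (1 + t))^c (1 + t)^{m-c} = (-1)^c (1 + t)^{m-c}`. Comparing coefficients face by face,
both sides become `∑_{σ ∈ K} ± C(m - |σ|, k)` with matching signs.
-/

open Finset Polynomial

/-- A (nonempty) abstract simplicial complex on the vertex set `Fin m`. -/
def IsSimplicialComplex {m : ℕ} (K : Finset (Finset (Fin m))) : Prop :=
  ∅ ∈ K ∧ ∀ σ ∈ K, ∀ τ ⊆ σ, τ ∈ K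

/-- `faceNum K j` is the number of faces of `K` of cardinality `j` (this is `f_{j-1}`). -/
def faceNum {m : ℕ} (K : Finset (Finset (Fin m))) (j : ℕ) : ℕ :=
  (K.filter fun s => s.card = j).card

/-- The polynomial `∑_{p=0}^{m-1} f_{p-1} (t-1)^p`; its coefficients form the α-vector. -/
noncomputable def alphaPoly {m : ℕ} (K : Finset (Finset (Fin m))) : Polynomial ℤ :=
  ∑ p ∈ Finset.range m, Polynomial.C (faceNum K p : ℤ) * (Polynomial.X - 1) ^ p

/-- The combinatorial Alexander dual of `K`. -/
def dualC {m : ℕ} (K : Finset (Finset (Fin m))) : Finset (Finset (Fin m)) :=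
  Finset.univ.filter fun σ => σᶜ ∉ K

/-- The link of a face `S` in `K`. -/
def linkC {m : ℕ} (K : Finset (Finset (Fin m))) (S : Finset (Fin m)) :
    Finset (Finset (Fin m)) :=
  Finset.univ.filter fun T => Disjoint T S ∧ T ∪ S ∈ K

/-- The (non-reduced) Euler characteristic `χ(L) = ∑_{∅≠σ∈L} (-1)^{|σ|-1}`. -/
def eulerChar {m : ℕ} (L : Finset (Finset (Fin m))) : ℤ :=
  ∑ σ ∈ L.filter (· ≠ ∅), (-1 : ℤ) ^ (σ.card - 1)

/-- `f_{j-1}(Bier(K))`: the number of faces `I ⊔ J'` of the Bier sphere of cardinality `j`. -/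
def bierFaceNum {m : ℕ} (K : Finset (Finset (Fin m))) (j : ℕ) : ℕ :=
  ((K ×ˢ dualC K).filter fun p => Disjoint p.1 p.2 ∧ p.1.card + p.2.card = j).card

/-- `μ_k(K) = (-1)^{m-k-1} ∑_{j=0}^{k} C(m-j, k-j) α_j(K)`. -/
noncomputable def muVec {m : ℕ} (K : Finset (Finset (Fin m))) (k : ℕ) : ℤ :=
  (-1 : ℤ) ^ (m - k - 1) *
    ∑ j ∈ Finset.range (k + 1), ((m - j).choose (k - j) : ℤ) * (alphaPoly K).coeff j

lemma IsSimplicialComplex.univ_notMem {m : ℕ} {K : Finset (Finset (Fin m))}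
    (hK : IsSimplicialComplex K) (hne : K ≠ univ) : univ ∉ K := fun h =>
  hne (eq_univ_of_forall fun σ => hK.2 _ h σ (subset_univ σ))

lemma coeff_X_sub_one_pow (c j : ℕ) :
    ((X - 1 : ℤ[X]) ^ c).coeff j = (-1) ^ (c - j) * c.choose j := by
  simpa [sub_eq_add_neg] using coeff_X_add_C_pow (-1 : ℤ) c j

lemma alphaPoly_eq_sum_faces {m : ℕ} {L : Finset (Finset (Fin m))} (hL : univ ∉ L) :
    alphaPoly L = ∑ σ ∈ L, (X - 1 : ℤ[X]) ^ σ.card := by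
  have hcard : ∀ σ ∈ L, σ.card ∈ range m := fun σ hσ =>
    mem_range.2 (by simpa using (card_lt_iff_ne_univ σ).2 (ne_of_mem_of_not_mem hσ hL))
  rw [alphaPoly, ← sum_fiberwise_of_maps_to hcard]
  refine sum_congr rfl fun p _ => ?_
  rw [sum_congr rfl fun σ hσ => by rw [(mem_filter.1 hσ).2], sum_const, nsmul_eq_mul, faceNum,
    map_natCast]

lemma sum_dualC_add_sum_compl {M : Type*} [AddCommMonoid M] {m : ℕ}
    (K : Finset (Finset (Fin m))) (f : Finset (Fin m) → M) :
    ∑ σ ∈ dualC K, f σ + ∑ τ ∈ K, f τᶜ = ∑ σ, f σ := by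
  rw [← sum_filter_not_add_sum_filter univ fun σ => σᶜ ∈ K]
  congr 1
  exact sum_nbij' compl compl (by simp) (by simp) (by simp) (by simp) (by simp)

lemma alphaPoly_dualC {m : ℕ} {K : Finset (Finset (Fin m))} (hK : ∅ ∈ K) :
    alphaPoly (dualC K) = X ^ m - ∑ τ ∈ K, (X - 1 : ℤ[X]) ^ (m - τ.card) := by
  have hdual : univ ∉ dualC K := by simpa [dualC] using hK
  have hsum_univ : ∑ σ : Finset (Fin m), (X - 1 : ℤ[X]) ^ σ.card = X ^ m := by
    have := Fintype.sum_pow_mul_eq_add_pow (Fin m) (X - 1 : ℤ[X]) 1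
    simp only [one_pow, mul_one, Fintype.card_fin] at this
    rw [this, sub_add_cancel]
  rw [alphaPoly_eq_sum_faces hdual, eq_sub_iff_add_eq, ← hsum_univ,
    ← sum_dualC_add_sum_compl K]
  simp [card_compl]

lemma coeff_alphaPoly_dualC {m i : ℕ} {K : Finset (Finset (Fin m))} (hK : ∅ ∈ K) (hi : i < m) :
    (alphaPoly (dualC K)).coeff i
      = -∑ τ ∈ K, (-1) ^ (m - τ.card - i) * ((m - τ.card).choose i : ℤ) := by
  rw [alphaPoly_dualC hK, coeff_sub, coeff_X_pow, if_neg hi.ne, zero_sub, finsetSum_coeff]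
  simp_rw [coeff_X_sub_one_pow]

lemma coeff_sum_C_mul_X_pow_mul_one_add_X_pow (a : ℕ → ℤ) {m i : ℕ} (hi : i ≤ m) :
    (∑ j ∈ range (m + 1), C (a j) * (X ^ j * (1 + X) ^ (m - j))).coeff i
      = ∑ j ∈ range (i + 1), ((m - j).choose (i - j) : ℤ) * a j := by
  have hterm : ∀ j, (C (a j) * (X ^ j * (1 + X) ^ (m - j))).coeff i
      = if j ≤ i then ((m - j).choose (i - j) : ℤ) * a j else 0 := by
    intro j
    rw [coeff_C_mul, coeff_X_pow_mul']
    split_ifs <;> simp [coeff_one_add_X_pow, mul_comm]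
  rw [finsetSum_coeff, ← sum_subset (range_subset_range.2 (by omega : i + 1 ≤ m + 1))]
  · exact sum_congr rfl fun j hj => by rw [hterm, if_pos (by simpa [Nat.lt_succ_iff] using hj)]
  · intro j _ hj
    rw [hterm, if_neg (by simpa using hj)]

lemma sum_coeff_X_sub_one_pow_mul {m c : ℕ} (hc : c ≤ m) :
    ∑ j ∈ range (m + 1), C (((X - 1 : ℤ[X]) ^ c).coeff j) * (X ^ j * (1 + X) ^ (m - j))
      = C ((-1) ^ c) * (1 + X) ^ (m - c) := by
  rw [← sum_subset (range_subset_range.2 (by omega : c + 1 ≤ m + 1)) fun j _ hj => by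
    rw [coeff_X_sub_one_pow, Nat.choose_eq_zero_of_lt (by simpa using hj)]; simp]
  calc _ = (X + -(1 + X)) ^ c * (1 + X) ^ (m - c) := by
        rw [add_pow, sum_mul]
        refine sum_congr rfl fun j hj => ?_
        rw [coeff_X_sub_one_pow, neg_pow (1 + X : ℤ[X]), show m - j = (c - j) + (m - c) by
          have := mem_range.1 hj; omega, pow_add]
        simp only [map_mul, map_pow, map_neg, map_one, map_natCast]
        ring
    _ = _ := by simp only [map_pow, map_neg, map_one]; ring

lemma sum_choose_mul_coeff_X_sub_one_pow {m c i : ℕ} (hc : c ≤ m) (hi : i ≤ m) :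
    ∑ j ∈ range (i + 1), ((m - j).choose (i - j) : ℤ) * ((X - 1 : ℤ[X]) ^ c).coeff j
      = (-1) ^ c * (m - c).choose i := by
  rw [← coeff_sum_C_mul_X_pow_mul_one_add_X_pow _ hi, sum_coeff_X_sub_one_pow_mul hc,
    coeff_C_mul, coeff_one_add_X_pow]

lemma muVec_eq_sum_faces {m i : ℕ} {K : Finset (Finset (Fin m))} (hK : univ ∉ K) (hi : i ≤ m) :
    muVec K i = (-1) ^ (m - i - 1) * ∑ σ ∈ K, (-1) ^ σ.card * ((m - σ.card).choose i : ℤ) := by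
  rw [muVec, alphaPoly_eq_sum_faces hK]
  congr 1
  simp_rw [finsetSum_coeff, mul_sum]
  rw [sum_comm]
  exact sum_congr rfl fun σ _ =>
    sum_choose_mul_coeff_X_sub_one_pow ((card_le_univ σ).trans_eq (Fintype.card_fin m)) hi

lemma neg_one_pow_mul_choose_eq {m c i : ℕ} (hc : c ≤ m) (hi : i < m) :
    (-1 : ℤ) ^ (m - i - 1) * ((-1) ^ c * (m - c).choose i)
      = -((-1) ^ (m - c - i) * (m - c).choose i) := by
  rcases le_or_gt (i + c) m with h | h
  · have hsign : (-1 : ℤ) ^ (m - i - 1 + c) = -(-1) ^ (m - c - i) := by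
      rw [neg_eq_neg_one_mul ((-1 : ℤ) ^ _), ← pow_succ']
      exact neg_one_pow_congr (by simp only [Nat.even_iff]; omega)
    rw [← mul_assoc, ← pow_add, hsign, neg_mul]
  · rw [Nat.choose_eq_zero_of_lt (by omega)]
    simp

theorem stmt3_general {m : ℕ} (K : Finset (Finset (Fin m)))
    (hK : IsSimplicialComplex K) (hKne : K ≠ Finset.univ)
    (i : ℕ) (hi : i ≤ m - 1) :
    muVec K i = (alphaPoly (dualC K)).coeff i := by
  have huniv : univ ∉ K := hK.univ_notMem hKne
  have hm : m ≠ 0 := by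
    rintro rfl
    exact huniv (by simpa [univ_eq_empty] using hK.1)
  have him : i < m := by omega
  rw [muVec_eq_sum_faces huniv him.le, coeff_alphaPoly_dualC hK.1 him, mul_sum,
    ← sum_neg_distrib]
  exact sum_congr rfl fun σ _ =>
    neg_one_pow_mul_choose_eq ((card_le_univ σ).trans_eq (Fintype.card_fin m)) him

theorem stmt3 {m : ℕ} (hm : 2 ≤ m) (K : Finset (Finset (Fin m)))
    (hK : IsSimplicialComplex K) (hKne : K ≠ Finset.univ)
    (i : ℕ) (hi : i ≤ m - 1) :
    muVec K i = (alphaPoly (dualC K)).coeff i :=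
  stmt3_general K hK hKne i hi
end

section
/- For a simplicial complex K ≠ Δ_[m] on [m] with m ≥ 2, the h-vector of the Bier sphere Bier(K) satisfies h_p(Bier(K)) = 1 + (f_0 + ... + f_{p-2}) + f_{p-1} − (f_{m-p-1} + ... + f_{m-2}) expressed precisely as: h_p(Bier(K)) = Σ_{i=0}^{p} f_{i-1}(K) − Σ_{i=m-p}^{m-1} f_{i-1}(K), for 0 ≤ p ≤ m-1, where f-numbers of Bier(K) are f_{j-1}(Bier(K)) = Σ over pairs (I,J) with I ∈ K, J ∈ K^∨ (viewed in disjoint copies of [m]), I∩J=∅, |I|+|J| = j. -/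
/-!
Write a face of `Bier(K)` as `I ⊔ J'` and put `L = [m] ∖ J`: faces of cardinality `k` are the
pairs `I ⊆ L` with `I ∈ K`, `L ∉ K`, `|L| - |I| = m - k`. Double counting all pairs `I ⊆ L` with
`I ∈ K` (those with `L ∈ K` are counted from `L`, since `K` is closed under subsets) gives
`f_{k-1}(Bier K) = ∑_{I ∈ K} C(m - |I|, m - k) - ∑_{L ∈ K} C(|L|, m - k)`. By the binomial theorem
the h-polynomial of `Bier(K)` times `t - 1` is then `∑_{I ∈ K} (t^(m - |I|) - t^|I|)`, and by
geometric sums so is the polynomial built from the claimed `h_p`; cancel `t - 1` in `ℤ[t]`.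
-/

open Finset Polynomial

section SubsetCounting

variable {α : Type*} [Fintype α] [DecidableEq α]

theorem card_filter_superset_card_add (I : Finset α) (d : ℕ) :
    #{L | I ⊆ L ∧ #I + d = #L} = (Fintype.card α - #I).choose d := by
  rw [← card_compl, ← card_powersetCard]
  refine card_nbij' (· \ I) (· ∪ I) (fun L h => ?_) (fun S h => ?_) (fun L h => ?_)
    (fun S h => ?_)
  all_goals simp only [coe_filter, mem_univ, true_and, mem_coe, mem_powersetCard,
    Set.mem_ofPred_eq] at h ⊢
  · refine ⟨fun x hx => mem_compl.2 (mem_sdiff.1 hx).2, ?_⟩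
    rw [card_sdiff_of_subset h.1]
    omega
  · have hSI : Disjoint S I := subset_compl_iff_disjoint_right.1 h.1
    exact ⟨subset_union_right, by rw [card_union_of_disjoint hSI]; omega⟩
  · exact sdiff_union_of_subset h.1
  · exact union_sdiff_cancel_right (subset_compl_iff_disjoint_right.1 h.1)

theorem card_filter_subset_card_add (L : Finset α) (d : ℕ) :
    #{I | I ⊆ L ∧ #I + d = #L} = (#L).choose d := by
  rw [← card_powersetCard]
  refine card_nbij' (L \ ·) (L \ ·) (fun I h => ?_) (fun S h => ?_) (fun I h => ?_)
    (fun S h => ?_)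
  all_goals simp only [coe_filter, mem_univ, true_and, mem_coe, mem_powersetCard,
    Set.mem_ofPred_eq] at h ⊢
  · exact ⟨sdiff_subset, by rw [card_sdiff_of_subset h.1]; omega⟩
  · have := card_le_card h.1
    exact ⟨sdiff_subset, by rw [card_sdiff_of_subset h.1]; omega⟩
  · exact Finset.sdiff_sdiff_eq_self h.1
  · exact Finset.sdiff_sdiff_eq_self h.1

end SubsetCounting

section PowerSums

variable {R : Type*} [CommRing R] (x : R)

theorem sum_choose_mul_sub_one_pow {m n : ℕ} (hn : n ≤ m) :
    ∑ k ∈ range m, (n.choose (m - k) : R) * (x - 1) ^ (m - k) = x ^ n - 1 := by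
  set g : ℕ → R := fun d => (n.choose d : R) * (x - 1) ^ d
  have hbinom : x ^ n = ∑ d ∈ range (m + 1), g d := calc
    x ^ n = ∑ d ∈ range (n + 1), g d := by
      simpa [g, mul_comm] using add_pow (x - 1) 1 n
    _ = ∑ d ∈ range (m + 1), g d :=
      sum_subset (range_subset_range.2 (by omega)) fun d _ hd => by
        simp [g, Nat.choose_eq_zero_of_lt (by simpa using hd : n < d)]
  rw [hbinom, sum_range_succ', ← sum_range_reflect]
  simp only [g, Nat.choose_zero_right, pow_zero, Nat.cast_one, mul_one, add_sub_cancel_right]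
  refine sum_congr rfl fun k hk => ?_
  rw [mem_range] at hk
  rw [show m - (m - 1 - k) = k + 1 by omega]

theorem sum_Ico_pow_mul_sub_one (a m : ℕ) :
    (∑ p ∈ Ico a m, x ^ (m - 1 - p)) * (x - 1) = x ^ (m - a) - 1 := by
  rw [sum_Ico_eq_sum_range, ← geom_sum_mul, ← sum_range_reflect]
  congr 1
  refine sum_congr rfl fun q hq => ?_
  rw [mem_range] at hq
  rw [show m - 1 - (a + (m - a - 1 - q)) = q by omega]

theorem sum_partialSums_sub_mul_sub_one (f : ℕ → R) (m : ℕ) :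
    (∑ p ∈ range m,
        ((∑ i ∈ range (p + 1), f i) - ∑ i ∈ Icc (m - p) (m - 1), f i) * x ^ (m - 1 - p)) *
      (x - 1) = ∑ i ∈ range m, f i * (x ^ (m - i) - x ^ i) := by
  have hlow : ∑ p ∈ range m, (∑ i ∈ range (p + 1), f i) * x ^ (m - 1 - p) =
      ∑ i ∈ range m, f i * ∑ p ∈ Ico i m, x ^ (m - 1 - p) := by
    simp_rw [sum_mul, mul_sum]
    exact sum_comm' fun p i => by simp only [mem_range, mem_Ico]; omega
  have hhigh : ∑ p ∈ range m, (∑ i ∈ Icc (m - p) (m - 1), f i) * x ^ (m - 1 - p) =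
      ∑ i ∈ range m, f i * ∑ p ∈ Ico (m - i) m, x ^ (m - 1 - p) := by
    simp_rw [sum_mul, mul_sum]
    exact sum_comm' fun p i => by simp only [mem_range, mem_Icc, mem_Ico]; omega
  simp_rw [sub_mul, sum_sub_distrib, hlow, hhigh, sub_mul, sum_mul, ← sum_sub_distrib, mul_assoc,
    sum_Ico_pow_mul_sub_one, ← mul_sub]
  refine sum_congr rfl fun i hi => ?_
  rw [Nat.sub_sub_self (mem_range.1 hi).le]
  ring

end PowerSums

variable {m : ℕ} {K : Finset (Finset (Fin m))}

theorem IsSimplicialComplex.card_lt_of_mem (hK : IsSimplicialComplex K) (hKne : K ≠ univ)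
    {I : Finset (Fin m)} (hI : I ∈ K) : #I < m := by
  refine (card_le_univ I).trans_eq (Fintype.card_fin m) |>.lt_of_ne fun hcard => hKne ?_
  have hIuniv : I = univ := eq_univ_of_card I (by rw [hcard, Fintype.card_fin])
  exact eq_univ_of_forall fun σ => hK.2 I hI σ (hIuniv ▸ subset_univ σ)

theorem sum_faceNum_mul {R : Type*} [NonAssocSemiring R] (hlt : ∀ I ∈ K, #I < m)
    (g : ℕ → R) : ∑ i ∈ range m, (faceNum K i : R) * g i = ∑ I ∈ K, g #I := by
  rw [← sum_fiberwise_of_maps_to fun I hI => mem_range.2 (hlt I hI)]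
  refine sum_congr rfl fun i _ => ?_
  rw [faceNum, sum_congr rfl fun I hI => by rw [(mem_filter.1 hI).2], sum_const, nsmul_eq_mul]

theorem dualC_eq_image_compl (K : Finset (Finset (Fin m))) : dualC K = Kᶜ.image compl := by
  ext σ
  simp [dualC]

theorem bierFaceNum_eq_sum_compl {k : ℕ} (hk : k ≤ m) :
    bierFaceNum K k = ∑ L ∈ Kᶜ, #{I ∈ K | I ⊆ L ∧ #I + (m - k) = #L} := by
  rw [bierFaceNum, card_filter, sum_product_right, dualC_eq_image_compl,
    sum_image compl_injective.injOn]
  refine sum_congr rfl fun L _ => ?_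
  rw [← card_filter]
  refine congrArg card (filter_congr fun I _ => ?_)
  have hL : #L ≤ m := (card_le_univ L).trans_eq (Fintype.card_fin m)
  dsimp only
  rw [disjoint_compl_right_iff, card_compl, Fintype.card_fin]
  exact and_congr_right fun hIL => by have := card_le_card hIL; omega

theorem bierFaceNum_add_sum_choose (hK : IsSimplicialComplex K) {k : ℕ} (hk : k ≤ m) :
    bierFaceNum K k + ∑ L ∈ K, (#L).choose (m - k) = ∑ I ∈ K, (m - #I).choose (m - k) := by
  have hbelow : ∀ L ∈ K, #{I ∈ K | I ⊆ L ∧ #I + (m - k) = #L} = (#L).choose (m - k) := by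
    intro L hL
    rw [← card_filter_subset_card_add]
    congr 1
    ext I
    simp only [mem_filter, mem_univ, true_and]
    exact and_iff_right_of_imp fun h => hK.2 L hL I h.1
  calc bierFaceNum K k + ∑ L ∈ K, (#L).choose (m - k)
      = ∑ L, #{I ∈ K | I ⊆ L ∧ #I + (m - k) = #L} := by
        rw [bierFaceNum_eq_sum_compl hk, ← sum_congr rfl hbelow, add_comm, sum_add_sum_compl]
    _ = ∑ I ∈ K, #{L | I ⊆ L ∧ #I + (m - k) = #L} :=
        (sum_card_bipartiteAbove_eq_sum_card_bipartiteBelow _).symm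
    _ = ∑ I ∈ K, (m - #I).choose (m - k) := by
        simp only [card_filter_superset_card_add, Fintype.card_fin]

theorem sum_bierFaceNum_mul_sub_one {R : Type*} [CommRing R] (hK : IsSimplicialComplex K)
    (x : R) : (∑ k ∈ range m, (bierFaceNum K k : R) * (x - 1) ^ (m - 1 - k)) * (x - 1) =
      ∑ I ∈ K, (x ^ (m - #I) - x ^ #I) := by
  have hterm : ∀ k ∈ range m, (bierFaceNum K k : R) * (x - 1) ^ (m - 1 - k) * (x - 1) =
      ∑ I ∈ K, ((m - #I).choose (m - k) : R) * (x - 1) ^ (m - k) -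
        ∑ I ∈ K, ((#I).choose (m - k) : R) * (x - 1) ^ (m - k) := by
    intro k hk
    rw [mem_range] at hk
    rw [mul_assoc, ← pow_succ, show m - 1 - k + 1 = m - k by omega, ← sum_mul, ← sum_mul,
      ← sub_mul]
    congr 1
    rw [eq_sub_iff_add_eq]
    exact_mod_cast congrArg (Nat.cast : ℕ → R) (bierFaceNum_add_sum_choose hK hk.le)
  rw [sum_mul, sum_congr rfl hterm, sum_sub_distrib, sum_comm, sum_comm (s := range m),
    ← sum_sub_distrib]
  refine sum_congr rfl fun I _ => ?_
  rw [sum_choose_mul_sub_one_pow x (Nat.sub_le m #I),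
    sum_choose_mul_sub_one_pow x ((card_le_univ I).trans_eq (Fintype.card_fin m))]
  ring

theorem Polynomial.coeff_sum_C_mul_X_pow_sub {R : Type*} [Semiring R] (a : ℕ → R) {m p : ℕ}
    (hp : p < m) : (∑ k ∈ range m, C (a k) * X ^ (m - 1 - k)).coeff (m - 1 - p) = a p := by
  simp only [finsetSum_coeff, coeff_C_mul, coeff_X_pow]
  rw [sum_eq_single_of_mem p (mem_range.2 hp) fun k hk hkp => ?_]
  · simp
  · rw [if_neg (by rw [mem_range] at hk; omega), mul_zero]

theorem stmt10_general {m : ℕ} (K : Finset (Finset (Fin m)))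
    (hK : IsSimplicialComplex K) (hKne : K ≠ Finset.univ)
    (h : ℕ → ℤ)
    (hdef : ∑ k ∈ Finset.range m, Polynomial.C (h k) * Polynomial.X ^ (m - 1 - k) =
      ∑ k ∈ Finset.range m,
        Polynomial.C (bierFaceNum K k : ℤ) * (Polynomial.X - 1) ^ (m - 1 - k))
    (p : ℕ) (hp : p ≤ m - 1) :
    h p = ∑ i ∈ Finset.range (p + 1), (faceNum K i : ℤ) -
      ∑ i ∈ Finset.Icc (m - p) (m - 1), (faceNum K i : ℤ) := by
  have hlt : ∀ I ∈ K, #I < m := fun I hI => hK.card_lt_of_mem hKne hI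
  have hm : 0 < m := hlt ∅ hK.1
  set H : ℕ → ℤ := fun q => ∑ i ∈ range (q + 1), (faceNum K i : ℤ) -
    ∑ i ∈ Icc (m - q) (m - 1), (faceNum K i : ℤ)
  have hpoly : ∑ k ∈ range m, C (h k) * X ^ (m - 1 - k) =
      ∑ k ∈ range m, C (H k) * X ^ (m - 1 - k) := by
    refine mul_right_cancel₀ (X_sub_C_ne_zero (1 : ℤ)) ?_
    simp only [H, hdef, map_sub, map_sum, map_natCast, C_1]
    rw [sum_bierFaceNum_mul_sub_one hK, sum_partialSums_sub_mul_sub_one, sum_faceNum_mul hlt]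
  have hcoeff := congrArg (coeff · (m - 1 - p)) hpoly
  have hpm : p < m := by omega
  rwa [coeff_sum_C_mul_X_pow_sub h hpm, coeff_sum_C_mul_X_pow_sub H hpm] at hcoeff

theorem stmt10 {m : ℕ} (hm : 2 ≤ m) (K : Finset (Finset (Fin m)))
    (hK : IsSimplicialComplex K) (hKne : K ≠ Finset.univ)
    (h : ℕ → ℤ)
    (hdef : ∑ k ∈ Finset.range m, Polynomial.C (h k) * Polynomial.X ^ (m - 1 - k) =
      ∑ k ∈ Finset.range m,
        Polynomial.C (bierFaceNum K k : ℤ) * (Polynomial.X - 1) ^ (m - 1 - k))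
    (p : ℕ) (hp : p ≤ m - 1) :
    h p = ∑ i ∈ Finset.range (p + 1), (faceNum K i : ℤ) -
      ∑ i ∈ Finset.Icc (m - p) (m - 1), (faceNum K i : ℤ) :=
  stmt10_general K hK hKne h hdef p hp
end

section
/- For a simplicial complex K ≠ Δ_[m] on [m], the Bier sphere satisfies the Dehn–Sommerville relations h_p(Bier(K)) = h_{m-1-p}(Bier(K)) for all 0 ≤ p ≤ m-1. -/
open Finset Polynomial

lemma neg_one_pow_of_add {a b n : ℕ} (h : a + b = n) : (-1 : ℤ)^a = (-1)^n * (-1)^b := by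
  subst h
  rw [pow_add, mul_assoc, ← pow_add]
  rw [Even.neg_one_pow ⟨b, rfl⟩, mul_one]


lemma sumalt {m : ℕ} (I C : Finset (Fin m)) :
    ∑ A : Finset (Fin m), (if I ⊆ A ∧ A ⊆ C then (-1:ℤ)^A.card else 0)
      = if C = I then (-1:ℤ)^I.card else 0 := by
  classical
  rw [← Finset.sum_filter]
  by_cases hIC : I ⊆ C
  · have key : ∑ A ∈ Finset.univ.filter (fun A => I ⊆ A ∧ A ⊆ C), (-1:ℤ)^A.card
        = ∑ D ∈ (C \ I).powerset, (-1:ℤ)^I.card * (-1:ℤ)^D.card := by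
      refine Finset.sum_nbij' (fun A => A \ I) (fun D => D ∪ I) ?_ ?_ ?_ ?_ ?_
      · intro A hA; simp only [mem_filter, mem_univ, true_and] at hA
        exact Finset.mem_powerset.2 (Finset.sdiff_subset_sdiff hA.2 (le_refl I))
      · intro D hD
        simp only [Finset.mem_powerset] at hD
        simp only [mem_filter, mem_univ, true_and]
        exact ⟨Finset.subset_union_right,
          Finset.union_subset (hD.trans Finset.sdiff_subset) hIC⟩
      · intro A hA; simp only [mem_filter, mem_univ, true_and] at hA
        exact Finset.sdiff_union_of_subset hA.1
      · intro D hD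
        simp only [Finset.mem_powerset] at hD
        have hdisj : Disjoint D I :=
          Finset.disjoint_of_subset_left hD Finset.sdiff_disjoint
        exact Finset.union_sdiff_cancel_right hdisj
      · intro A hA; simp only [mem_filter, mem_univ, true_and] at hA
        rw [← pow_add]
        congr 1
        show A.card = I.card + (A \ I).card
        have h1 : (A \ I).card = A.card - I.card := Finset.card_sdiff_of_subset hA.1
        have h2 : I.card ≤ A.card := Finset.card_le_card hA.1
        omega
    rw [key, ← Finset.mul_sum, Finset.sum_powerset_neg_one_pow_card]
    by_cases hC : C = I
    · simp [hC]
    · have hne : ¬ (C \ I = ∅) := by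
        intro he
        exact hC (le_antisymm (Finset.sdiff_eq_empty_iff_subset.1 he) hIC)
      simp [hne, hC]
  · have hC : ¬ (C = I) := fun he => hIC (he ▸ le_refl C)
    rw [if_neg hC]
    apply Finset.sum_eq_zero
    intro A hA
    simp only [mem_filter, mem_univ, true_and] at hA
    exact absurd (hA.1.trans hA.2) hIC

lemma subsetComplIff {m : ℕ} (A B : Finset (Fin m)) : A ⊆ Bᶜ ↔ Disjoint A B :=
  Finset.le_iff_subset.symm.trans le_compl_iff_disjoint_right

lemma disjComplLeftIff {m : ℕ} (B J : Finset (Fin m)) : Disjoint Bᶜ J ↔ J ⊆ B :=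
  disjoint_compl_left_iff.trans Finset.le_iff_subset


lemma bier_core {m : ℕ} (K : Finset (Finset (Fin m)))
    (hcl : ∀ σ ∈ K, ∀ τ ⊆ σ, τ ∈ K)
    (I J : Finset (Fin m)) (hI : I ∈ K) (hJ : Jᶜ ∉ K) (hIJ : Disjoint I J) :
    ∑ A : Finset (Fin m), ∑ B : Finset (Fin m),
      (if A ∈ K ∧ Bᶜ ∉ K ∧ Disjoint A B ∧ I ⊆ A ∧ J ⊆ B
        then (-1:ℤ)^(A.card + B.card) else 0)
      = -(-1:ℤ)^m := by
  classical
  have hm : ∀ B : Finset (Fin m), B.card + Bᶜ.card = m := by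
    intro B; rw [Finset.card_add_card_compl, Fintype.card_fin]
  -- Step 1+2+3+4 : rewrite each outer term
  have step1 : ∀ A : Finset (Fin m),
      (∑ B : Finset (Fin m),
        (if A ∈ K ∧ Bᶜ ∉ K ∧ Disjoint A B ∧ I ⊆ A ∧ J ⊆ B
          then (-1:ℤ)^(A.card + B.card) else 0))
      = (if A ∈ K ∧ I ⊆ A then
          (-(-1:ℤ)^m) * ((-1:ℤ)^A.card *
            ∑ C : Finset (Fin m),
              (if C ∈ K ∧ A ⊆ C ∧ Disjoint C J then (-1:ℤ)^C.card else 0))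
          else 0) := by
    intro A
    by_cases hA : A ∈ K ∧ I ⊆ A
    · rw [if_pos hA]
      -- reindex B ↦ Bᶜ
      have reidx : (∑ B : Finset (Fin m),
          (if A ∈ K ∧ Bᶜ ∉ K ∧ Disjoint A B ∧ I ⊆ A ∧ J ⊆ B
            then (-1:ℤ)^(A.card + B.card) else 0))
          = ∑ C : Finset (Fin m),
            (if C ∉ K ∧ A ⊆ C ∧ Disjoint C J
              then (-1:ℤ)^m * ((-1:ℤ)^A.card * (-1:ℤ)^C.card) else 0) := by
      
        refine Fintype.sum_bijective compl compl_involutive.bijective _ _ ?_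
        intro B
        have h1 : A ⊆ Bᶜ ↔ Disjoint A B := subsetComplIff A B
        have h2 : Disjoint Bᶜ J ↔ J ⊆ B := disjComplLeftIff B J
        have hcond : (A ∈ K ∧ Bᶜ ∉ K ∧ Disjoint A B ∧ I ⊆ A ∧ J ⊆ B)
            ↔ (Bᶜ ∉ K ∧ A ⊆ Bᶜ ∧ Disjoint Bᶜ J) := by
          constructor
          · rintro ⟨_, hb, hd, _, hj⟩; exact ⟨hb, h1.2 hd, h2.2 hj⟩
          · rintro ⟨hb, hd, hj⟩; exact ⟨hA.1, hb, h1.1 hd, hA.2, h2.1 hj⟩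
        rw [if_congr hcond rfl rfl]
        by_cases hc : Bᶜ ∉ K ∧ A ⊆ Bᶜ ∧ Disjoint Bᶜ J
        · rw [if_pos hc, if_pos hc, pow_add]
          have : (-1:ℤ)^B.card = (-1)^m * (-1:ℤ)^Bᶜ.card :=
            neg_one_pow_of_add (hm B)
          rw [this]; ring
        · rw [if_neg hc, if_neg hc]
      rw [reidx]
      -- split the negation
      have split : ∀ C : Finset (Fin m),
          (if C ∉ K ∧ A ⊆ C ∧ Disjoint C J
            then (-1:ℤ)^m * ((-1:ℤ)^A.card * (-1:ℤ)^C.card) else 0)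
          = (if A ⊆ C ∧ Disjoint C J
              then (-1:ℤ)^m * ((-1:ℤ)^A.card * (-1:ℤ)^C.card) else 0)
            - (if C ∈ K ∧ A ⊆ C ∧ Disjoint C J
              then (-1:ℤ)^m * ((-1:ℤ)^A.card * (-1:ℤ)^C.card) else 0) := by
        intro C
        by_cases h1 : C ∈ K <;> by_cases h2 : A ⊆ C ∧ Disjoint C J <;>
          simp [h1, h2]
      rw [Finset.sum_congr rfl (fun C _ => split C), Finset.sum_sub_distrib]
      -- first sum vanishes
      have van : (∑ C : Finset (Fin m),
          (if A ⊆ C ∧ Disjoint C J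
            then (-1:ℤ)^m * ((-1:ℤ)^A.card * (-1:ℤ)^C.card) else 0)) = 0 := by
        have : ∀ C : Finset (Fin m),
            (if A ⊆ C ∧ Disjoint C J
              then (-1:ℤ)^m * ((-1:ℤ)^A.card * (-1:ℤ)^C.card) else 0)
            = ((-1:ℤ)^m * (-1:ℤ)^A.card) *
              (if A ⊆ C ∧ C ⊆ Jᶜ then (-1:ℤ)^C.card else 0) := by
          intro C
          have hd : Disjoint C J ↔ C ⊆ Jᶜ := (subsetComplIff C J).symm
          by_cases hc : A ⊆ C ∧ Disjoint C J
          · rw [if_pos hc, if_pos ⟨hc.1, hd.1 hc.2⟩]; ring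
          · rw [if_neg hc, if_neg (fun hcc => hc ⟨hcc.1, hd.2 hcc.2⟩), mul_zero]
        rw [Finset.sum_congr rfl (fun C _ => this C), ← Finset.mul_sum,
          sumalt A Jᶜ]
        have : ¬ (Jᶜ = A) := fun he => hJ (he ▸ hA.1)
        rw [if_neg this, mul_zero]
      rw [van, zero_sub]
      -- move constants
      have pull : (∑ C : Finset (Fin m),
          (if C ∈ K ∧ A ⊆ C ∧ Disjoint C J
            then (-1:ℤ)^m * ((-1:ℤ)^A.card * (-1:ℤ)^C.card) else 0))
          = (-1:ℤ)^m * ((-1:ℤ)^A.card *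
            ∑ C : Finset (Fin m),
              (if C ∈ K ∧ A ⊆ C ∧ Disjoint C J then (-1:ℤ)^C.card else 0)) := by
        rw [Finset.mul_sum, Finset.mul_sum]
        exact Finset.sum_congr rfl (fun C _ => by
          by_cases hc : C ∈ K ∧ A ⊆ C ∧ Disjoint C J <;> simp [hc])
      rw [pull]; ring
    · rw [if_neg hA]
      apply Finset.sum_eq_zero
      intro B _
      rw [if_neg (fun hc => hA ⟨hc.1, hc.2.2.2.1⟩)]
  rw [Finset.sum_congr rfl (fun A _ => step1 A)]
  -- turn each guarded term into a double sum
  have step2 : ∀ A : Finset (Fin m),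
      (if A ∈ K ∧ I ⊆ A then
          (-(-1:ℤ)^m) * ((-1:ℤ)^A.card *
            ∑ C : Finset (Fin m),
              (if C ∈ K ∧ A ⊆ C ∧ Disjoint C J then (-1:ℤ)^C.card else 0))
          else 0)
      = (-(-1:ℤ)^m) * ∑ C : Finset (Fin m),
          (if (A ∈ K ∧ I ⊆ A) ∧ (C ∈ K ∧ A ⊆ C ∧ Disjoint C J)
            then (-1:ℤ)^A.card * (-1:ℤ)^C.card else 0) := by
    intro A
    by_cases hA : A ∈ K ∧ I ⊆ A
    · rw [if_pos hA]
      congr 1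
      rw [Finset.mul_sum]
      exact Finset.sum_congr rfl (fun C _ => by
        by_cases hc : C ∈ K ∧ A ⊆ C ∧ Disjoint C J <;> simp [hc, hA])
    · rw [if_neg hA]
      rw [Finset.sum_eq_zero (fun C _ => by
        rw [if_neg (fun hc => hA hc.1)]), mul_zero]
  rw [Finset.sum_congr rfl (fun A _ => step2 A), ← Finset.mul_sum]
  rw [Finset.sum_comm]
  have step3 : ∀ C : Finset (Fin m),
      (∑ A : Finset (Fin m),
        (if (A ∈ K ∧ I ⊆ A) ∧ (C ∈ K ∧ A ⊆ C ∧ Disjoint C J)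
          then (-1:ℤ)^A.card * (-1:ℤ)^C.card else 0))
      = (if C ∈ K ∧ Disjoint C J then
          (if C = I then (-1:ℤ)^I.card else 0) * (-1:ℤ)^C.card else 0) := by
    intro C
    by_cases hC : C ∈ K ∧ Disjoint C J
    · rw [if_pos hC]
      have : ∀ A : Finset (Fin m),
          (if (A ∈ K ∧ I ⊆ A) ∧ (C ∈ K ∧ A ⊆ C ∧ Disjoint C J)
            then (-1:ℤ)^A.card * (-1:ℤ)^C.card else 0)
          = (if I ⊆ A ∧ A ⊆ C then (-1:ℤ)^A.card else 0) * (-1:ℤ)^C.card := by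
        intro A
        have hiff : ((A ∈ K ∧ I ⊆ A) ∧ (C ∈ K ∧ A ⊆ C ∧ Disjoint C J))
            ↔ (I ⊆ A ∧ A ⊆ C) :=
          ⟨fun h => ⟨h.1.2, h.2.2.1⟩,
           fun h => ⟨⟨hcl C hC.1 A h.2, h.1⟩, ⟨hC.1, h.2, hC.2⟩⟩⟩
        rw [if_congr hiff rfl rfl]
        by_cases h2 : I ⊆ A ∧ A ⊆ C <;> simp [h2]
      rw [Finset.sum_congr rfl (fun A _ => this A), ← Finset.sum_mul, sumalt]
    · rw [if_neg hC]
      exact Finset.sum_eq_zero (fun A _ => by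
        rw [if_neg (fun hc => hC ⟨hc.2.1, hc.2.2.2⟩)])
  rw [Finset.sum_congr rfl (fun C _ => step3 C)]
  have last : (∑ C : Finset (Fin m),
      (if C ∈ K ∧ Disjoint C J then
        (if C = I then (-1:ℤ)^I.card else 0) * (-1:ℤ)^C.card else 0)) = 1 := by
    rw [Finset.sum_eq_single I]
    · rw [if_pos ⟨hI, hIJ⟩, if_pos rfl, ← pow_add]
      exact Even.neg_one_pow ⟨I.card, rfl⟩
    · intro C _ hCne
      by_cases hC : C ∈ K ∧ Disjoint C J <;> simp [hC, hCne]
    · intro habs; exact absurd (Finset.mem_univ I) habs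
  rw [last, mul_one]

def bierF {m : ℕ} (K : Finset (Finset (Fin m))) :
    Finset (Finset (Fin m) × Finset (Fin m)) :=
  (K ×ˢ dualC K).filter fun p => Disjoint p.1 p.2

lemma mem_bierF {m : ℕ} {K : Finset (Finset (Fin m))}
    {σ : Finset (Fin m) × Finset (Fin m)} :
    σ ∈ bierF K ↔ σ.1 ∈ K ∧ σ.2ᶜ ∉ K ∧ Disjoint σ.1 σ.2 := by
  simp only [bierF, dualC, Finset.mem_filter, Finset.mem_product, Finset.mem_univ,
    true_and]
  tauto

lemma bierFaceNum_eq {m : ℕ} (K : Finset (Finset (Fin m))) (j : ℕ) :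
    bierFaceNum K j
      = ((bierF K).filter fun σ => σ.1.card + σ.2.card = j).card := by
  unfold bierFaceNum bierF
  rw [Finset.filter_filter]

lemma bier_card_lt {m : ℕ} {K : Finset (Finset (Fin m))}
    {σ : Finset (Fin m) × Finset (Fin m)} (hσ : σ ∈ bierF K) :
    σ.1.card + σ.2.card < m := by
  obtain ⟨h1, h2, hd⟩ := mem_bierF.1 hσ
  have hle : σ.1.card + σ.2.card ≤ m := by
    rw [← Finset.card_union_of_disjoint hd]
    simpa [Fintype.card_fin] using Finset.card_le_univ (σ.1 ∪ σ.2)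
  rcases lt_or_eq_of_le hle with h | h
  · exact h
  · exfalso
    have huniv : σ.1 ∪ σ.2 = Finset.univ := by
      apply Finset.eq_univ_of_card
      rw [Finset.card_union_of_disjoint hd, h, Fintype.card_fin]
    have : σ.2ᶜ = σ.1 := by
      ext x
      simp only [Finset.mem_compl]
      constructor
      · intro hx
        have : x ∈ σ.1 ∪ σ.2 := huniv ▸ Finset.mem_univ x
        rcases Finset.mem_union.1 this with h' | h'
        · exact h'
        · exact absurd h' hx
      · intro hx
        exact fun hx2 => (Finset.disjoint_left.1 hd) hx hx2
    exact h2 (this ▸ h1)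

lemma bier_core' {m : ℕ} {K : Finset (Finset (Fin m))}
    (hcl : ∀ σ ∈ K, ∀ τ ⊆ σ, τ ∈ K)
    {τ : Finset (Fin m) × Finset (Fin m)} (hτ : τ ∈ bierF K) :
    ∑ σ ∈ (bierF K).filter (fun σ => τ.1 ⊆ σ.1 ∧ τ.2 ⊆ σ.2),
      (-1:ℤ)^(σ.1.card + σ.2.card) = -(-1:ℤ)^m := by
  obtain ⟨h1, h2, hd⟩ := mem_bierF.1 hτ
  have hset : (bierF K).filter (fun σ => τ.1 ⊆ σ.1 ∧ τ.2 ⊆ σ.2)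
      = (Finset.univ ×ˢ Finset.univ).filter
        (fun σ => σ.1 ∈ K ∧ σ.2ᶜ ∉ K ∧ Disjoint σ.1 σ.2 ∧ τ.1 ⊆ σ.1 ∧ τ.2 ⊆ σ.2) := by
    ext σ
    simp only [Finset.mem_filter, Finset.mem_product, Finset.mem_univ, true_and,
      mem_bierF]
    tauto
  rw [hset, Finset.sum_filter, Finset.sum_product]
  exact bier_core K hcl τ.1 τ.2 h1 h2 hd

lemma subcount {m : ℕ} (σ : Finset (Fin m) × Finset (Fin m))
    (hd : Disjoint σ.1 σ.2) (p : ℕ) :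
    ((σ.1.powerset ×ˢ σ.2.powerset).filter
        fun τ => τ.1.card + τ.2.card = p).card
      = (σ.1.card + σ.2.card).choose p := by
  rw [← Finset.card_union_of_disjoint hd, ← Finset.card_powersetCard]
  refine Finset.card_bij' (fun τ _ => τ.1 ∪ τ.2)
    (fun T _ => (T ∩ σ.1, T ∩ σ.2)) ?_ ?_ ?_ ?_
  · intro τ hτ
    simp only [Finset.mem_filter, Finset.mem_product, Finset.mem_powerset] at hτ
    obtain ⟨⟨hs1, hs2⟩, hc⟩ := hτ
    have hdτ : Disjoint τ.1 τ.2 :=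
      Finset.disjoint_of_subset_left hs1 (Finset.disjoint_of_subset_right hs2 hd)
    rw [Finset.mem_powersetCard]
    exact ⟨Finset.union_subset_union hs1 hs2,
      by rw [Finset.card_union_of_disjoint hdτ, hc]⟩
  · intro T hT
    rw [Finset.mem_powersetCard] at hT
    obtain ⟨hsub, hcard⟩ := hT
    simp only [Finset.mem_filter, Finset.mem_product, Finset.mem_powerset]
    refine ⟨⟨Finset.inter_subset_right, Finset.inter_subset_right⟩, ?_⟩
    have hTu : (T ∩ σ.1) ∪ (T ∩ σ.2) = T := by
      rw [← Finset.inter_union_distrib_left]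
      exact Finset.inter_eq_left.2 hsub
    have hdT : Disjoint (T ∩ σ.1) (T ∩ σ.2) :=
      Finset.disjoint_of_subset_left Finset.inter_subset_right
        (Finset.disjoint_of_subset_right Finset.inter_subset_right hd)
    calc (T ∩ σ.1).card + (T ∩ σ.2).card
        = ((T ∩ σ.1) ∪ (T ∩ σ.2)).card := (Finset.card_union_of_disjoint hdT).symm
      _ = T.card := by rw [hTu]
      _ = p := hcard
  · intro τ hτ
    simp only [Finset.mem_filter, Finset.mem_product, Finset.mem_powerset] at hτ
    obtain ⟨⟨hs1, hs2⟩, _⟩ := hτ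
    have e1 : (τ.1 ∪ τ.2) ∩ σ.1 = τ.1 := by
      rw [Finset.union_inter_distrib_right]
      have : τ.2 ∩ σ.1 = ∅ := by
        apply Finset.eq_empty_of_forall_notMem
        intro x hx
        rw [Finset.mem_inter] at hx
        exact (Finset.disjoint_right.1 hd) (hs2 hx.1) hx.2
      rw [this, Finset.union_empty]
      exact Finset.inter_eq_left.2 hs1
    have e2 : (τ.1 ∪ τ.2) ∩ σ.2 = τ.2 := by
      rw [Finset.union_inter_distrib_right]
      have : τ.1 ∩ σ.2 = ∅ := by
        apply Finset.eq_empty_of_forall_notMem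
        intro x hx
        rw [Finset.mem_inter] at hx
        exact (Finset.disjoint_left.1 hd) (hs1 hx.1) hx.2
      rw [this, Finset.empty_union]
      exact Finset.inter_eq_left.2 hs2
    exact Prod.ext e1 e2
  · intro T hT
    rw [Finset.mem_powersetCard] at hT
    show (T ∩ σ.1) ∪ (T ∩ σ.2) = T
    rw [← Finset.inter_union_distrib_left]
    exact Finset.inter_eq_left.2 hT.1

lemma frel {m : ℕ} (K : Finset (Finset (Fin m)))
    (hcl : ∀ σ ∈ K, ∀ τ ⊆ σ, τ ∈ K) (p : ℕ) :
    ∑ k ∈ Finset.range m, (-1:ℤ)^k * (k.choose p) * (bierFaceNum K k)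
      = -(-1:ℤ)^m * (bierFaceNum K p) := by
  classical
  have hmap : ∀ σ ∈ bierF K, σ.1.card + σ.2.card ∈ Finset.range m :=
    fun σ hσ => Finset.mem_range.2 (bier_card_lt hσ)
  have hb : ∑ k ∈ Finset.range m, (-1:ℤ)^k * (k.choose p) * (bierFaceNum K k)
      = ∑ σ ∈ bierF K,
          (-1:ℤ)^(σ.1.card + σ.2.card) * ((σ.1.card + σ.2.card).choose p) := by
    rw [← Finset.sum_fiberwise_of_maps_to hmap
      (fun σ => (-1:ℤ)^(σ.1.card + σ.2.card) * ((σ.1.card + σ.2.card).choose p))]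
    apply Finset.sum_congr rfl
    intro k _
    rw [bierFaceNum_eq]
    rw [Finset.sum_congr rfl (fun σ hσ => by
      rw [(Finset.mem_filter.1 hσ).2])]
    rw [Finset.sum_const, nsmul_eq_mul]
    ring
  rw [hb]
  have hc : ∀ σ ∈ bierF K,
      (-1:ℤ)^(σ.1.card + σ.2.card) * ((σ.1.card + σ.2.card).choose p)
      = ∑ τ ∈ (σ.1.powerset ×ˢ σ.2.powerset).filter
          (fun τ => τ.1.card + τ.2.card = p),
          (-1:ℤ)^(σ.1.card + σ.2.card) := by
    intro σ hσ
    rw [Finset.sum_const, nsmul_eq_mul, ← subcount σ (mem_bierF.1 hσ).2.2 p]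
    ring
  rw [Finset.sum_congr rfl hc]
  have hcomm : ∀ (σ τ : Finset (Fin m) × Finset (Fin m)),
      σ ∈ bierF K ∧ τ ∈ (σ.1.powerset ×ˢ σ.2.powerset).filter
          (fun τ => τ.1.card + τ.2.card = p)
      ↔ σ ∈ (bierF K).filter (fun σ => τ.1 ⊆ σ.1 ∧ τ.2 ⊆ σ.2)
        ∧ τ ∈ (bierF K).filter (fun τ => τ.1.card + τ.2.card = p) := by
    intro σ τ
    simp only [Finset.mem_filter, Finset.mem_product, Finset.mem_powerset,
      mem_bierF]
    constructor
    · rintro ⟨⟨h1, h2, hd⟩, ⟨⟨hs1, hs2⟩, hcard⟩⟩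
      refine ⟨⟨⟨h1, h2, hd⟩, hs1, hs2⟩, ⟨⟨hcl σ.1 h1 τ.1 hs1, ?_, ?_⟩, hcard⟩⟩
      · intro habs
        exact h2 (hcl τ.2ᶜ habs σ.2ᶜ (Finset.compl_subset_compl.2 hs2))
      · exact Finset.disjoint_of_subset_left hs1
          (Finset.disjoint_of_subset_right hs2 hd)
    · rintro ⟨⟨hσb, hs1, hs2⟩, ⟨_, hcard⟩⟩
      exact ⟨hσb, ⟨⟨hs1, hs2⟩, hcard⟩⟩
  rw [Finset.sum_comm' hcomm]
  rw [Finset.sum_congr rfl (fun τ hτ =>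
    bier_core' hcl (Finset.mem_filter.1 hτ).1)]
  rw [Finset.sum_const, nsmul_eq_mul, bierFaceNum_eq]
  ring

lemma reflect_sum {N : ℕ} (s : Finset ℕ) (g : ℕ → ℤ[X]) :
    Polynomial.reflect N (∑ k ∈ s, g k) = ∑ k ∈ s, Polynomial.reflect N (g k) := by
  classical
  induction s using Finset.cons_induction with
  | empty => simp
  | cons a s ha ih =>
    rw [Finset.sum_cons, Finset.sum_cons, Polynomial.reflect_add, ih]

lemma comp_sum (s : Finset ℕ) (g : ℕ → ℤ[X]) (q : ℤ[X]) :
    (∑ k ∈ s, g k).comp q = ∑ k ∈ s, (g k).comp q := by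
  classical
  induction s using Finset.cons_induction with
  | empty => simp
  | cons a s ha ih =>
    rw [Finset.sum_cons, Finset.sum_cons, Polynomial.add_comp, ih]

lemma natDegree_X_sub_one_pow_le (n : ℕ) : (((X : ℤ[X]) - 1)^n).natDegree ≤ n := by
  refine le_trans Polynomial.natDegree_pow_le ?_
  have : ((X : ℤ[X]) - 1).natDegree = 1 := by
    simpa using Polynomial.natDegree_X_sub_C (1:ℤ)
  rw [this, mul_one]

lemma reflect_X_sub_one_pow (n : ℕ) :
    Polynomial.reflect n (((X : ℤ[X]) - 1)^n) = (1 - (X : ℤ[X]))^n := by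
  induction n with
  | zero => simp
  | succ n ih =>
    have hdeg : ((X : ℤ[X]) - 1).natDegree ≤ 1 :=
      le_of_eq (by simpa using Polynomial.natDegree_X_sub_C (1:ℤ))
    rw [pow_succ, Polynomial.reflect_mul (F := n) (G := 1) _ _ (natDegree_X_sub_one_pow_le n) hdeg, ih]
    have h1 : ((X:ℤ[X]) - 1) = X ^ 1 + Polynomial.C (-1) * X ^ 0 := by
      simp [sub_eq_add_neg]
    rw [h1, Polynomial.reflect_add, Polynomial.reflect_monomial,
      Polynomial.reflect_C_mul_X_pow, Polynomial.revAt_le (le_refl 1),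
      Polynomial.revAt_le (Nat.zero_le 1)]
    simp only [Nat.sub_self, pow_zero, Nat.sub_zero, pow_one, map_neg, map_one]
    ring

lemma neg_neg_one_pow {m : ℕ} (hm : 1 ≤ m) : -(-1:ℤ)^m = (-1:ℤ)^(m-1) := by
  obtain ⟨n, rfl⟩ : ∃ n, m = n + 1 := ⟨m-1, by omega⟩
  simp [pow_succ]

lemma reflect_X_sub_one_pow' {N : ℕ} (a b : ℕ) (h : a + b = N) :
    Polynomial.reflect N (((X:ℤ[X]) - 1)^a) = (1 - (X:ℤ[X]))^a * X^b := by
  subst h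
  rw [← mul_one (((X:ℤ[X]) - 1)^a),
    Polynomial.reflect_mul (F := a) (G := b) _ _
      (natDegree_X_sub_one_pow_le a) (by simp),
    reflect_X_sub_one_pow]
  congr 1
  rw [show (1 : ℤ[X]) = C 1 * X ^ 0 by simp, Polynomial.reflect_C_mul_X_pow,
    Polynomial.revAt_le (Nat.zero_le b)]
  simp

lemma reflect_P {m : ℕ} (f : ℕ → ℤ) :
    Polynomial.reflect (m-1)
        (∑ k ∈ Finset.range m, C (f k) * ((X:ℤ[X]) - 1)^(m-1-k))
      = ∑ k ∈ Finset.range m,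
          C ((-1)^(m-1-k) * f k) * ((X:ℤ[X]) - 1)^(m-1-k) * X^k := by
  rw [reflect_sum]
  apply Finset.sum_congr rfl
  intro k hk
  have hk' : k < m := Finset.mem_range.1 hk
  have hsplit : (m - 1 - k) + k = m - 1 := by omega
  rw [Polynomial.reflect_C_mul]
  have hrefl : Polynomial.reflect (m-1) (((X:ℤ[X]) - 1)^(m-1-k))
      = (1 - (X:ℤ[X]))^(m-1-k) * X^k := reflect_X_sub_one_pow' (m-1-k) k hsplit
  rw [hrefl]
  have hneg : (1 - (X:ℤ[X]))^(m-1-k)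
      = C ((-1:ℤ)^(m-1-k)) * ((X:ℤ[X]) - 1)^(m-1-k) := by
    rw [show (1 - (X:ℤ[X])) = -((X:ℤ[X]) - 1) by ring, neg_pow]
    simp [map_pow]
  rw [hneg]
  rw [map_mul, map_pow]
  simp only [map_neg, map_one]
  ring

lemma PQ_comp {m : ℕ} (hm : 1 ≤ m) (K : Finset (Finset (Fin m)))
    (hcl : ∀ σ ∈ K, ∀ τ ⊆ σ, τ ∈ K) :
    (∑ k ∈ Finset.range m, C ((bierFaceNum K k : ℤ)) * (X:ℤ[X])^(m-1-k))
      = ∑ k ∈ Finset.range m,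
          C ((-1)^(m-1-k) * (bierFaceNum K k : ℤ)) * ((X:ℤ[X]) + 1)^k
            * X^(m-1-k) := by
  apply Polynomial.ext
  intro d
  rw [Polynomial.finset_sum_coeff, Polynomial.finset_sum_coeff]
  by_cases hd : m - 1 < d
  · refine (Finset.sum_eq_zero ?_).trans (Finset.sum_eq_zero ?_).symm
    · intro k hk
      have hk' : k < m := Finset.mem_range.1 hk
      rw [Polynomial.coeff_C_mul, Polynomial.coeff_X_pow, if_neg (by omega),
        mul_zero]
    · intro k hk
      have hk' : k < m := Finset.mem_range.1 hk
      rw [Polynomial.coeff_mul_X_pow', if_pos (by omega : m - 1 - k ≤ d),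
        Polynomial.coeff_C_mul]
      rw [show ((X:ℤ[X]) + 1)^k = ((X:ℤ[X]) + C 1)^k by simp,
        Polynomial.coeff_X_add_C_pow, Nat.choose_eq_zero_of_lt (by omega)]
      simp
  · push_neg at hd
    have hL : ∑ k ∈ Finset.range m,
        (C ((bierFaceNum K k:ℤ)) * (X:ℤ[X])^(m-1-k)).coeff d
        = (bierFaceNum K (m-1-d) : ℤ) := by
      rw [Finset.sum_eq_single (m-1-d)]
      · rw [Polynomial.coeff_C_mul, Polynomial.coeff_X_pow,
          if_pos (by omega : d = m-1-(m-1-d)), mul_one]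
      · intro k hk hne
        have hk' : k < m := Finset.mem_range.1 hk
        rw [Polynomial.coeff_C_mul, Polynomial.coeff_X_pow, if_neg (by omega),
          mul_zero]
      · intro habs
        exact absurd (Finset.mem_range.2 (by omega : m-1-d < m)) habs
    rw [hL]
    have hR : ∀ k ∈ Finset.range m,
        (C ((-1)^(m-1-k) * (bierFaceNum K k : ℤ)) * ((X:ℤ[X]) + 1)^k
          * X^(m-1-k)).coeff d
        = -(-1:ℤ)^m * ((-1:ℤ)^k * (k.choose (m-1-d)) * (bierFaceNum K k : ℤ)) := by
      intro k hk
      have hk' : k < m := Finset.mem_range.1 hk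
      rw [Polynomial.coeff_mul_X_pow']
      by_cases hkp : m - 1 - d ≤ k
      · rw [if_pos (by omega), Polynomial.coeff_C_mul,
          show ((X:ℤ[X]) + 1)^k = ((X:ℤ[X]) + C 1)^k by simp,
          Polynomial.coeff_X_add_C_pow,
          show d - (m-1-k) = k - (m-1-d) by omega,
          Nat.choose_symm hkp, one_pow]
        have hsign : (-1:ℤ)^(m-1-k) = -(-1:ℤ)^m * (-1:ℤ)^k := by
          have h1 : (-1:ℤ)^(m-1-k) = (-1:ℤ)^(m-1) * (-1:ℤ)^k :=
            neg_one_pow_of_add (by omega)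
          rw [h1, neg_neg_one_pow hm]
        rw [hsign]; ring
      · rw [if_neg (by omega), Nat.choose_eq_zero_of_lt (by omega)]
        simp
    rw [Finset.sum_congr rfl hR, ← Finset.mul_sum, frel K hcl (m-1-d)]
    have hsq : (-(-1:ℤ)^m) * (-(-1:ℤ)^m) = 1 := by
      rw [neg_mul_neg, ← pow_add, Even.neg_one_pow ⟨m, rfl⟩]
    rw [← mul_assoc, hsq, one_mul]

lemma coeff_hsum {m : ℕ} (h : ℕ → ℤ) (q : ℕ) (hq : q < m) :
    (∑ k ∈ Finset.range m, C (h k) * (X:ℤ[X])^(m-1-k)).coeff (m-1-q) = h q := by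
  rw [Polynomial.finset_sum_coeff, Finset.sum_eq_single q]
  · rw [Polynomial.coeff_C_mul, Polynomial.coeff_X_pow, if_pos rfl, mul_one]
  · intro k hk hne
    have hk' : k < m := Finset.mem_range.1 hk
    rw [Polynomial.coeff_C_mul, Polynomial.coeff_X_pow, if_neg (by omega),
      mul_zero]
  · intro habs
    exact absurd (Finset.mem_range.2 hq) habs


theorem stmt11 {m : ℕ} (hm : 2 ≤ m) (K : Finset (Finset (Fin m)))
    (hK : IsSimplicialComplex K) (hKne : K ≠ Finset.univ)
    (h : ℕ → ℤ)
    (hdef : ∑ k ∈ Finset.range m, Polynomial.C (h k) * Polynomial.X ^ (m - 1 - k) =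
      ∑ k ∈ Finset.range m,
        Polynomial.C (bierFaceNum K k : ℤ) * (Polynomial.X - 1) ^ (m - 1 - k))
    (p : ℕ) (hp : p ≤ m - 1) :
    h p = h (m - 1 - p) := by
  classical
  obtain ⟨-, hcl⟩ := hK
  have hm1 : 1 ≤ m := by omega
  -- P = Q via composition with X + 1
  have hPQ : (∑ k ∈ Finset.range m,
        C ((bierFaceNum K k : ℤ)) * ((X:ℤ[X]) - 1)^(m-1-k))
      = ∑ k ∈ Finset.range m,
        C ((-1)^(m-1-k) * (bierFaceNum K k : ℤ)) * ((X:ℤ[X]) - 1)^(m-1-k)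
          * X^k := by
    have hPc : (∑ k ∈ Finset.range m,
          C ((bierFaceNum K k : ℤ)) * ((X:ℤ[X]) - 1)^(m-1-k)).comp ((X:ℤ[X]) + 1)
        = ∑ k ∈ Finset.range m, C ((bierFaceNum K k : ℤ)) * (X:ℤ[X])^(m-1-k) := by
      rw [comp_sum]
      refine Finset.sum_congr rfl (fun k _ => ?_)
      rw [Polynomial.mul_comp, Polynomial.C_comp, Polynomial.pow_comp,
        Polynomial.sub_comp, Polynomial.X_comp, Polynomial.one_comp,
        add_sub_cancel_right]
    have hQc : (∑ k ∈ Finset.range m,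
          C ((-1)^(m-1-k) * (bierFaceNum K k : ℤ)) * ((X:ℤ[X]) - 1)^(m-1-k)
            * X^k).comp ((X:ℤ[X]) + 1)
        = ∑ k ∈ Finset.range m,
          C ((-1)^(m-1-k) * (bierFaceNum K k : ℤ)) * ((X:ℤ[X]) + 1)^k
            * X^(m-1-k) := by
      rw [comp_sum]
      refine Finset.sum_congr rfl (fun k _ => ?_)
      rw [Polynomial.mul_comp, Polynomial.mul_comp, Polynomial.C_comp,
        Polynomial.pow_comp, Polynomial.pow_comp, Polynomial.sub_comp,
        Polynomial.X_comp, Polynomial.one_comp, add_sub_cancel_right]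
      ring
    have hcan : ∀ R : ℤ[X],
        (R.comp ((X:ℤ[X]) + 1)).comp ((X:ℤ[X]) - 1) = R := by
      intro R
      rw [Polynomial.comp_assoc]
      simp
    have hcomp := hPc.trans ((PQ_comp hm1 K hcl).trans hQc.symm)
    rw [← hcan (∑ k ∈ Finset.range m,
        C ((bierFaceNum K k : ℤ)) * ((X:ℤ[X]) - 1)^(m-1-k)),
      ← hcan (∑ k ∈ Finset.range m,
        C ((-1)^(m-1-k) * (bierFaceNum K k : ℤ)) * ((X:ℤ[X]) - 1)^(m-1-k)
          * X^k), hcomp]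
  have hr : Polynomial.reflect (m-1)
      (∑ k ∈ Finset.range m,
        C ((bierFaceNum K k : ℤ)) * ((X:ℤ[X]) - 1)^(m-1-k))
      = ∑ k ∈ Finset.range m,
        C ((bierFaceNum K k : ℤ)) * ((X:ℤ[X]) - 1)^(m-1-k) :=
    (reflect_P _).trans hPQ.symm
  have e1 : h p = (∑ k ∈ Finset.range m,
      C ((bierFaceNum K k : ℤ)) * ((X:ℤ[X]) - 1)^(m-1-k)).coeff (m-1-p) := by
    have := coeff_hsum (m := m) h p (by omega)
    rw [hdef] at this
    exact this.symm
  have e2 : h (m-1-p) = (∑ k ∈ Finset.range m,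
      C ((bierFaceNum K k : ℤ)) * ((X:ℤ[X]) - 1)^(m-1-k)).coeff p := by
    have := coeff_hsum (m := m) h (m-1-p) (by omega)
    rw [hdef, show m-1-(m-1-p) = p by omega] at this
    exact this.symm
  rw [e1, e2]
  conv_rhs => rw [← hr, Polynomial.coeff_reflect, Polynomial.revAt_le hp]
end

section
/- The kernel of A^t − E, where A is the m×m involutive matrix with entries a_{k,j} = (-1)^{m-k-1} C(m-j, k-j) for j ≤ k, has dimension ⌊(m+1)/2⌋ over ℚ. -/
/-!
Since `A² = E`, the map `(E + Aᵀ)/2` is a projection onto `ker (Aᵀ - E)`, so this kernel has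
dimension equal to its trace `(m + tr A)/2`; the diagonal of `A` alternates in sign and ends
with `1`, so `tr A = m % 2`. The identity `A² = E` comes from
`C(m-k, i-k) C(m-j, k-j) = C(m-j, i-j) C(i-j, k-j)`, which turns the `(i, j)` entry of `A²`
into `C(m-j, i-j) · ∑ₖ (-1)^(i-k) C(i-j, k-j) = C(m-j, i-j) · 0^(i-j)`.
-/

/-- The lower-triangular matrix with entries `a_{k,j} = (-1)^{m-k-1} C(m-j, k-j)` for `j ≤ k`. -/
def matAQ (m : ℕ) : Matrix (Fin m) (Fin m) ℚ := fun k j =>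
  if (j : ℕ) ≤ (k : ℕ) then
    (-1 : ℚ) ^ (m - (k : ℕ) - 1) * ((m - (j : ℕ)).choose ((k : ℕ) - (j : ℕ)) : ℚ)
  else 0

open Finset Module
open scoped Matrix

theorem Module.End.finrank_ker_sub_one_mul_two_of_mul_self_eq_one {K V : Type*} [Field K]
    [NeZero (2 : K)] [AddCommGroup V] [Module K V] [FiniteDimensional K V] {T : End K V}
    (hT : T * T = 1) :
    (finrank K (LinearMap.ker (T - 1)) : K) * 2 = LinearMap.trace K V T + finrank K V := by
  have hTT (x : V) : T (T x) = x := congr($hT x)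
  have hproj : LinearMap.IsProj (LinearMap.ker (T - 1)) ((2 : K)⁻¹ • (T + 1)) := by
    refine ⟨fun x => ?_, fun x hx => ?_⟩
    · simp only [LinearMap.mem_ker, LinearMap.sub_apply, LinearMap.smul_apply, LinearMap.add_apply,
        map_smul, map_add, hTT, Module.End.one_apply]
      module
    · have hx : T x = x := sub_eq_zero.mp hx
      simp only [LinearMap.smul_apply, LinearMap.add_apply, hx, Module.End.one_apply]
      rw [← two_smul K, smul_smul, inv_mul_cancel₀ two_ne_zero, one_smul]
  have htrace := hproj.trace
  rw [map_smul, map_add, LinearMap.trace_one, smul_eq_mul] at htrace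
  rw [← htrace]
  field_simp

theorem Matrix.finrank_ker_mulVecLin_sub_one_mul_two_of_mul_self_eq_one {n K : Type*}
    [Fintype n] [DecidableEq n] [Field K] [NeZero (2 : K)] {M : Matrix n n K} (hM : M * M = 1) :
    (finrank K (LinearMap.ker (M - 1).mulVecLin) : K) * 2 = M.trace + Fintype.card n := by
  have hT : M.toLinAlgEquiv' * M.toLinAlgEquiv' = 1 := by rw [← map_mul, hM, map_one]
  have key := End.finrank_ker_sub_one_mul_two_of_mul_self_eq_one hT
  have hlin (N : Matrix n n K) : N.toLinAlgEquiv' = N.toLin' := rfl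
  rwa [← map_one Matrix.toLinAlgEquiv', ← map_sub, hlin, hlin, Matrix.toLin'_apply',
    Matrix.trace_toLin'_eq, finrank_fintype_fun_eq_card] at key

theorem sum_range_neg_one_pow_sub_mul_choose {R : Type*} [CommRing R] (n : ℕ) :
    ∑ t ∈ range (n + 1), (-1 : R) ^ (n - t) * n.choose t = 0 ^ n := by
  simpa using (add_pow (1 : R) (-1) n).symm

def matAQEntry (m k j : ℕ) : ℚ :=
  if j ≤ k then (-1 : ℚ) ^ (m - k - 1) * ((m - j).choose (k - j) : ℚ) else 0

theorem matAQ_apply (m : ℕ) (k j : Fin m) : matAQ m k j = matAQEntry m k j := rfl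

theorem matAQEntry_of_lt {m k j : ℕ} (h : k < j) : matAQEntry m k j = 0 :=
  if_neg (Nat.not_le.mpr h)

theorem matAQEntry_mul_matAQEntry {m i k j : ℕ} (hjk : j ≤ k) (hki : k ≤ i) (him : i < m) :
    matAQEntry m i k * matAQEntry m k j =
      (m - j).choose (i - j) * ((-1 : ℚ) ^ (i - k) * (i - j).choose (k - j)) := by
  have hsign : (-1 : ℚ) ^ (m - i - 1) * (-1) ^ (m - k - 1) = (-1) ^ (i - k) := by
    rw [show m - k - 1 = (m - i - 1) + (i - k) by omega, pow_add, ← mul_assoc, ← pow_add,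
      Even.neg_one_pow ⟨_, rfl⟩, one_mul]
  have hchoose : ((m - k).choose (i - k) * (m - j).choose (k - j) : ℚ) =
      (m - j).choose (i - j) * (i - j).choose (k - j) := by
    norm_cast
    rw [Nat.choose_mul (by omega : k - j ≤ i - j), show m - j - (k - j) = m - k by omega,
      show i - j - (k - j) = i - k by omega, mul_comm]
  simp only [matAQEntry, if_pos hjk, if_pos hki]
  rw [← hsign]
  linear_combination (-1 : ℚ) ^ (m - i - 1) * (-1) ^ (m - k - 1) * hchoose

theorem sum_matAQEntry_mul_matAQEntry {m i : ℕ} (j : ℕ) (him : i < m) :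
    ∑ k ∈ range m, matAQEntry m i k * matAQEntry m k j = if i = j then 1 else 0 := by
  by_cases hji : j ≤ i
  · obtain ⟨n, rfl⟩ : ∃ n, i = j + n := ⟨i - j, by omega⟩
    have hvanish : ∀ k ∈ range m, k ∉ range (j + (n + 1)) →
        matAQEntry m (j + n) k * matAQEntry m k j = 0 := fun k _ hk => by
      rw [matAQEntry_of_lt (by rw [mem_range] at hk; omega), zero_mul]
    rw [← sum_subset (range_subset_range.mpr (by omega)) hvanish, sum_range_add,
      sum_eq_zero fun k hk => by rw [matAQEntry_of_lt (mem_range.mp hk), mul_zero], zero_add,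
      sum_congr rfl fun t ht => matAQEntry_mul_matAQEntry (by omega) (by rw [mem_range] at ht; omega) him]
    simp only [add_tsub_cancel_left, Nat.add_sub_add_left, ← mul_sum]
    rw [sum_range_neg_one_pow_sub_mul_choose]
    rcases n with _ | n <;> simp
  · rw [if_neg (by omega)]
    refine sum_eq_zero fun k _ => ?_
    rcases lt_or_ge i k with hik | hki
    · rw [matAQEntry_of_lt hik, zero_mul]
    · rw [matAQEntry_of_lt (by omega : k < j), mul_zero]

theorem matAQ_mul_self (m : ℕ) : matAQ m * matAQ m = 1 := by
  ext i j
  simp only [Matrix.mul_apply, matAQ_apply]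
  rw [Matrix.one_apply, Fin.sum_univ_eq_sum_range
    (fun k => matAQEntry m i k * matAQEntry m k j) m, sum_matAQEntry_mul_matAQEntry j i.isLt]
  simp only [Fin.ext_iff]

theorem trace_matAQ (m : ℕ) : (matAQ m).trace = (m % 2 : ℕ) := by
  have hdiag (k : Fin m) : (matAQ m).diag k = (-1) ^ (m - 1 - k) := by
    simp only [Matrix.diag, matAQ, le_refl, if_true, Nat.sub_self, Nat.choose_zero_right,
      Nat.cast_one, mul_one, Nat.sub_right_comm]
  rw [Matrix.trace, sum_congr rfl fun k _ => hdiag k,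
    Fin.sum_univ_eq_sum_range (fun k => (-1 : ℚ) ^ (m - 1 - k)) m,
    sum_range_reflect (fun k => (-1 : ℚ) ^ k) m, neg_one_geom_sum]
  rcases Nat.even_or_odd m with h | h
  · simp [h, Nat.even_iff.mp h]
  · simp [Nat.not_even_iff_odd.mpr h, Nat.odd_iff.mp h]

theorem stmt14_general (m : ℕ) :
    Module.finrank ℚ (LinearMap.ker (Matrix.mulVecLin (Matrix.transpose (matAQ m) - 1))) = (m + 1) / 2 := by
  have hinv : (matAQ m)ᵀ * (matAQ m)ᵀ = 1 := by
    rw [← Matrix.transpose_mul, matAQ_mul_self, Matrix.transpose_one]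
  have hdim := Matrix.finrank_ker_mulVecLin_sub_one_mul_two_of_mul_self_eq_one hinv
  rw [Matrix.trace_transpose, trace_matAQ, Fintype.card_fin] at hdim
  have hcount : finrank ℚ (LinearMap.ker ((matAQ m)ᵀ - 1).mulVecLin) * 2 = m % 2 + m := by
    exact_mod_cast hdim
  omega

theorem stmt14 (m : ℕ) (hm : 1 ≤ m) :
    Module.finrank ℚ (LinearMap.ker (Matrix.mulVecLin (Matrix.transpose (matAQ m) - 1))) = (m + 1) / 2 :=
  stmt14_general m
end

section
/- For K_j = Δ_[j] * ∂Δ_[m-j] (the join of a (j-1)-simplex with the boundary of an (m-j-1)-simplex), the α-vector of the Alexander dual satisfies α_k(K_j^∨) = δ_{k,j} (Kronecker delta) for 0 ≤ k, j ≤ m-1. -/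
open Finset Polynomial

/-- The complex `K_j = Δ_{[j]} * ∂Δ_{{j+1,…,m}}`: all subsets of `[m]`
not containing `{j+1,…,m}`. -/
def Kcx (m j : ℕ) : Finset (Finset (Fin m)) :=
  Finset.univ.filter fun σ => ¬ (Finset.univ.filter fun i : Fin m => j ≤ (i : ℕ)) ⊆ σ

lemma card_filter_lt' (m j : ℕ) (h : j ≤ m) :
    (Finset.univ.filter fun i : Fin m => (i:ℕ) < j).card = j := by
  have heq : (Finset.univ.filter fun i : Fin m => (i:ℕ) < j)
      = Finset.map (Fin.castLEEmb h) Finset.univ := by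
    ext i
    simp only [mem_filter, mem_univ, true_and, Finset.mem_map, Fin.castLEEmb]
    constructor
    · intro hi; exact ⟨⟨i, hi⟩, rfl⟩
    · rintro ⟨a, rfl⟩; exact a.isLt
  simp [heq]

lemma dual_Kcx (m j : ℕ) :
    dualC (Kcx m j) = (Finset.univ.filter fun i : Fin m => (i:ℕ) < j).powerset := by
  ext σ
  simp only [dualC, Kcx, mem_filter, mem_univ, true_and, not_not, mem_powerset]
  constructor
  · intro h i hi
    simp only [mem_filter, mem_univ, true_and]
    by_contra hlt
    have hmem : i ∈ σᶜ := h (by simp [not_lt.mp hlt])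
    simp [Finset.mem_compl] at hmem
    exact hmem hi
  · intro h i hi
    simp only [mem_filter, mem_univ, true_and] at hi
    simp only [Finset.mem_compl]
    intro hσ
    exact absurd (mem_filter.mp (h hσ)).2 (not_lt.mpr hi)

lemma faceNum_powerset {m : ℕ} (S : Finset (Fin m)) (p : ℕ) :
    faceNum S.powerset p = S.card.choose p := by
  rw [faceNum, ← Finset.powersetCard_eq_filter, Finset.card_powersetCard]

theorem stmt15 (m j : ℕ) (hm : 2 ≤ m) (hj : j ≤ m - 1) (k : ℕ) (hk : k ≤ m - 1) :
    (alphaPoly (dualC (Kcx m j))).coeff k = if k = j then 1 else 0 := by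
  have hjm : j < m := lt_of_le_of_lt hj (Nat.sub_lt (by omega) one_pos)
  have hcard : (Finset.univ.filter fun i : Fin m => (i:ℕ) < j).card = j :=
    card_filter_lt' m j hjm.le
  have hpoly : alphaPoly (dualC (Kcx m j)) = Polynomial.X ^ j := by
    rw [alphaPoly, dual_Kcx]
    simp only [faceNum_powerset, hcard]
    have h1 : ∀ p ∈ Finset.range m, p ∉ Finset.range (j+1) →
        Polynomial.C ((j.choose p : ℕ) : ℤ) * (Polynomial.X - 1) ^ p = 0 := by
      intro p _ hp
      simp only [Finset.mem_range, not_lt] at hp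
      rw [Nat.choose_eq_zero_of_lt hp]
      simp
    rw [← Finset.sum_subset (Finset.range_subset_range.mpr hjm) h1]
    have hadd := add_pow (Polynomial.X - 1 : Polynomial ℤ) 1 j
    simp only [one_pow, mul_one, sub_add_cancel] at hadd
    rw [hadd]
    refine Finset.sum_congr rfl fun p _ => ?_
    rw [mul_comm]
    norm_cast
  rw [hpoly, Polynomial.coeff_X_pow]
end

section
/- For K_j = Δ_[j] * ∂Δ_[m-j], the α-vector satisfies α_k(K_j) = (-1)^{m-k-1} C(m-j, k-j) for j ≤ k ≤ m-1 and α_k(K_j) = 0 for k < j; i.e., the columns of the involutive matrix A are the α-vectors of the complexes K_j. -/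
open Finset Polynomial

lemma sum_powerset_X_sub_one {m : ℕ} (s : Finset (Fin m)) :
    ∑ t ∈ s.powerset, (X - 1 : Polynomial ℤ) ^ t.card = X ^ s.card := by
  have h := Finset.sum_pow_mul_eq_add_pow (X - 1 : Polynomial ℤ) 1 s
  simpa using h

lemma alpha_eq_sum {m : ℕ} (K : Finset (Finset (Fin m))) (hK : faceNum K m = 0) :
    alphaPoly K = ∑ σ ∈ K, (X - 1 : Polynomial ℤ) ^ σ.card := by
  have h1 : ∑ σ ∈ K, (X - 1 : Polynomial ℤ) ^ σ.card
      = ∑ p ∈ Finset.range (m + 1), ∑ σ ∈ K.filter (fun s => s.card = p),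
          (X - 1 : Polynomial ℤ) ^ σ.card := by
    refine (Finset.sum_fiberwise_of_maps_to (fun σ _ => ?_) _).symm
    have := Finset.card_le_card (Finset.subset_univ σ)
    simp only [Finset.card_univ, Fintype.card_fin] at this
    simp [Nat.lt_succ_iff, this]
  rw [alphaPoly, h1, Finset.sum_range_succ]
  have h2 : ∀ p, ∑ σ ∈ K.filter (fun s => s.card = p), (X - 1 : Polynomial ℤ) ^ σ.card
      = Polynomial.C (faceNum K p : ℤ) * (X - 1) ^ p := by
    intro p
    rw [Finset.sum_congr rfl (fun σ hσ => by rw [(Finset.mem_filter.1 hσ).2]),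
      Finset.sum_const, faceNum]
    simp [mul_comm]
  simp [h2, hK]

lemma key (m j : ℕ) (hjm : j < m) :
    alphaPoly (Kcx m j) = X ^ m - (X - 1) ^ (m - j) * X ^ j := by
  set A : Finset (Fin m) := Finset.univ.filter fun i : Fin m => j ≤ (i : ℕ) with hA
  have hAIci : A = Finset.Ici (⟨j, hjm⟩ : Fin m) := by
    ext i; simp [hA, Fin.le_def]
  have hAcard : A.card = m - j := by rw [hAIci, Fin.card_Ici]
  have hfm : faceNum (Kcx m j) m = 0 := by
    rw [faceNum, Finset.card_eq_zero, Finset.filter_eq_empty_iff]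
    intro σ hσ
    intro hc
    have : σ = Finset.univ := Finset.eq_univ_of_card σ (by simp [hc])
    rw [Kcx, Finset.mem_filter] at hσ
    exact hσ.2 (by rw [this]; exact Finset.subset_univ _)
  rw [alpha_eq_sum _ hfm]
  have hsplit := Finset.sum_filter_add_sum_filter_not Finset.univ
    (fun σ : Finset (Fin m) => A ⊆ σ) (fun σ => (X - 1 : Polynomial ℤ) ^ σ.card)
  have htot : ∑ σ : Finset (Fin m), (X - 1 : Polynomial ℤ) ^ σ.card = X ^ m := by
    rw [← Finset.powerset_univ, sum_powerset_X_sub_one]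
    simp
  have hsub : ∑ σ ∈ Finset.univ.filter (fun σ : Finset (Fin m) => A ⊆ σ),
      (X - 1 : Polynomial ℤ) ^ σ.card = (X - 1) ^ (m - j) * X ^ j := by
    rw [Finset.sum_nbij' (i := fun σ => σ \ A) (j := fun τ => τ ∪ A)
      (t := Aᶜ.powerset) (g := fun τ => (X - 1 : Polynomial ℤ) ^ (τ.card + (m - j)))]
    · simp only [pow_add]
      rw [← Finset.sum_mul, sum_powerset_X_sub_one, Finset.card_compl, hAcard,
        Fintype.card_fin]
      ring_nf
      congr 2
      omega
    · intro σ hσ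
      simp only [Finset.mem_powerset]
      intro x hx
      simp only [Finset.mem_sdiff] at hx
      simpa using hx.2
    · intro τ hτ
      simp [Finset.subset_union_right]
    · intro σ hσ
      exact Finset.sdiff_union_of_subset (Finset.mem_filter.1 hσ).2
    · intro τ hτ
      refine Finset.union_sdiff_cancel_right ?_
      exact Finset.disjoint_of_subset_left (Finset.mem_powerset.1 hτ) disjoint_compl_left
    · intro σ hσ
      have hAσ : A ⊆ σ := (Finset.mem_filter.1 hσ).2
      have hc : (σ \ A).card = σ.card - A.card := Finset.card_sdiff_of_subset hAσ
      have hle : A.card ≤ σ.card := Finset.card_le_card hAσ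
      congr 1
      rw [hc, hAcard]
      omega
  have hKeq : ∑ σ ∈ Kcx m j, ((X:Polynomial ℤ) - 1) ^ σ.card
      = ∑ x ∈ Finset.univ.filter (fun x : Finset (Fin m) => ¬ A ⊆ x), (X - 1) ^ x.card := rfl
  rw [hKeq]
  linear_combination hsplit + htot - hsub

theorem stmt16 (m j : ℕ) (hm : 2 ≤ m) (hj : j ≤ m - 1) (k : ℕ) (hk : k ≤ m - 1) :
    (j ≤ k → (alphaPoly (Kcx m j)).coeff k =
      (-1 : ℤ) ^ (m - k - 1) * ((m - j).choose (k - j) : ℤ)) ∧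
    (k < j → (alphaPoly (Kcx m j)).coeff k = 0) := by
  have hjm : j < m := by omega
  have hkm : k < m := by omega
  rw [key m j hjm]
  constructor
  · intro hjk
    rw [Polynomial.coeff_sub, Polynomial.coeff_X_pow, if_neg (by omega),
      Polynomial.coeff_mul_X_pow', if_pos hjk]
    have hXsub : ((X : Polynomial ℤ) - 1) = X + C (-1) := by simp [sub_eq_add_neg]
    rw [hXsub, Polynomial.coeff_X_add_C_pow]
    have h1 : m - j - (k - j) = m - k := by omega
    rw [h1]
    have h2 : m - k = (m - k - 1) + 1 := by omega
    rw [h2, pow_succ]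
    ring_nf
    congr 2
    omega
  · intro hkj
    rw [Polynomial.coeff_sub, Polynomial.coeff_X_pow, if_neg (by omega),
      Polynomial.coeff_mul_X_pow', if_neg (by omega)]
    ring
end

section
/- In ℤ/2, the mod-2 total Stiefel–Whitney computation reduces to: for I = (i_1,...,i_p) a partition of m-1, the product C(m,i_1)···C(m,i_p) of binomial coefficients is even whenever m is even; and when m = 2^{i_1} + ... + 2^{i_p} + 1 is the binary expansion shifted (m odd), the product C(m, 2^{i_1})···C(m, 2^{i_p}) is odd. -/
/-!
Lucas' theorem at `p = 2` says that `choose n k` is odd exactly when every binary digit of `k` is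
at most the corresponding digit of `n`. If `m` is even and the `i_t` sum to the odd number
`m - 1`, some `i_t` is odd, so its last digit exceeds that of `m` and `choose m i_t` is even.
If `m` is odd, every `2 ^ a_t` is a binary digit of `m - 1`, hence of `m`, so each
`choose m (2 ^ a_t)` is odd.
-/

open Finset

namespace Nat

theorem choose_mod_two (n k : ℕ) :
    n.choose k % 2 = (n % 2).choose (k % 2) * (n / 2).choose (k / 2) % 2 :=
  have : Fact (Nat.Prime 2) := ⟨prime_two⟩
  Choose.choose_modEq_choose_mod_mul_choose_div_nat

theorem two_dvd_choose_of_even_of_odd {n k : ℕ} (hn : Even n) (hk : Odd k) :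
    2 ∣ n.choose k := by
  rw [Nat.dvd_iff_mod_eq_zero, choose_mod_two, even_iff.mp hn, odd_iff.mp hk]
  simp

theorem choose_two_pow_mod_two_of_testBit {n j : ℕ} (h : n.testBit j = true) :
    n.choose (2 ^ j) % 2 = 1 := by
  induction j generalizing n with
  | zero => simpa [testBit_zero] using h
  | succ j ih =>
    rw [testBit_add_one] at h
    rw [choose_mod_two, pow_succ, Nat.mul_mod_left, Nat.mul_div_cancel _ two_pos,
      choose_zero_right, one_mul, ih h]

theorem testBit_succ_of_even {n j : ℕ} (hn : Even n) (h : n.testBit j = true) :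
    (n + 1).testBit j = true := by
  obtain ⟨k, rfl⟩ := hn
  cases j with
  | zero =>
    simp only [testBit_zero, decide_eq_true_eq] at h
    omega
  | succ j =>
    rw [testBit_add_one] at h ⊢
    rwa [show (k + k + 1) / 2 = (k + k) / 2 by omega]

theorem testBit_sum_two_pow {ι : Type*} [Fintype ι] {a : ι → ℕ} (ha : Function.Injective a)
    (t : ι) : (∑ s, 2 ^ a s).testBit (a t) = true := by
  rw [← sum_image fun x _ y _ h => ha h, ← mem_bitIndices, ← List.mem_toFinset,
    toFinset_bitIndices_sum_two_pow]
  exact mem_image_of_mem a (mem_univ t)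

end Nat

theorem Finset.exists_odd_of_odd_sum {ι : Type*} {s : Finset ι} {f : ι → ℕ}
    (h : Odd (∑ i ∈ s, f i)) : ∃ i ∈ s, Odd (f i) := by
  by_contra! hf
  exact Nat.not_even_iff_odd.mpr h (even_sum _ fun i hi => Nat.not_odd_iff_even.mp (hf i hi))

theorem Finset.prod_mod_two_eq_one {ι : Type*} {s : Finset ι} {f : ι → ℕ}
    (hf : ∀ i ∈ s, f i % 2 = 1) : (∏ i ∈ s, f i) % 2 = 1 := by
  rw [prod_nat_mod, prod_congr rfl hf, prod_const_one, Nat.one_mod]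

theorem stmt17 (m : ℕ) (hm : 2 ≤ m) :
    (Even m → ∀ (p : ℕ) (i : Fin p → ℕ), (∀ t, 1 ≤ i t) → (∑ t, i t = m - 1) →
      (∏ t, m.choose (i t)) % 2 = 0) ∧
    (Odd m → ∀ (p : ℕ) (a : Fin p → ℕ), Function.Injective a → (∑ t, 2 ^ a t = m - 1) →
      (∏ t, m.choose (2 ^ a t)) % 2 = 1) := by
  constructor
  · intro hm_even p i _ hsum
    have hodd : Odd (∑ t, i t) := hsum ▸ Nat.Even.sub_odd (by omega) hm_even odd_one
    obtain ⟨t, ht, hit⟩ := exists_odd_of_odd_sum hodd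
    exact Nat.mod_eq_zero_of_dvd <|
      (Nat.two_dvd_choose_of_even_of_odd hm_even hit).trans (dvd_prod_of_mem _ ht)
  · intro hm_odd p a ha hsum
    refine prod_mod_two_eq_one fun t _ => Nat.choose_two_pow_mod_two_of_testBit ?_
    have hbit := Nat.testBit_succ_of_even (Nat.Odd.sub_odd hm_odd odd_one)
      (hsum ▸ Nat.testBit_sum_two_pow ha t)
    rwa [Nat.sub_add_cancel (by omega)] at hbit
end
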